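/- arXiv:2010.01780 — 3 statements merged into one kernel-verified Lean document; each statement's English description precedes it below -/
import Mathlib

section
/- Let h be a harmonic function on SG. Then for any permutation (i,j,k) of (1,2,3): h(q_{ij}) = (2/5)h(q_i) + (2/5)h(q_j) + (1/5)h(q_k), where q_{ij} = u_i(q_j) is the midpoint vertex. -/
open Set Metric MeasureTheory Filter ENNReal

noncomputable section

/-- The three vertices of the equilateral triangle generating the Sierpinski gasket. -/
def q : Fin 3 → ℝ × ℝ := ![(0,0), (1,0), (1/2, Real.sqrt 3 / 2)]

/-- The contraction maps of the IFS: `u i x = (x + q i)/2`. -/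
def u (i : Fin 3) (x : ℝ × ℝ) : ℝ × ℝ := (2⁻¹ : ℝ) • (x + q i)

/-- The address map of the IFS. -/
def addr (σ : ℕ → Fin 3) : ℝ × ℝ := ∑' n, ((2:ℝ)⁻¹ ^ (n+1)) • q (σ n)

/-- The Sierpinski gasket, as the set of points with an address. -/
def SG : Set (ℝ × ℝ) := Set.range addr

/-- Composition `u_{w₁} ∘ ⋯ ∘ u_{w_n}` along a word `w`. -/
def uw : List (Fin 3) → (ℝ × ℝ) → (ℝ × ℝ)
  | [] => id
  | i :: w => u i ∘ uw w

/-- The level-`n` cell of `SG` indexed by a word `w ∈ {1,2,3}^n`. -/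
def cell {n : ℕ} (w : Fin n → Fin 3) : Set (ℝ × ℝ) := uw (List.ofFn w) '' SG

/-- Oscillation (maximum range) `R_f[X]` of `f` over `X`, valued in `ℝ≥0∞`. -/
def osc (f : ℝ × ℝ → ℝ) (X : Set (ℝ × ℝ)) : ℝ≥0∞ :=
  ⨆ x ∈ X, ⨆ y ∈ X, ENNReal.ofReal |f x - f y|

/-- Total oscillation of order `n`: `R(n,f) = Σ_{w ∈ {1,2,3}^n} R_f[u_w(SG)]`. -/
def oscSum (n : ℕ) (f : ℝ × ℝ → ℝ) : ℝ≥0∞ :=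
  ∑ w : Fin n → Fin 3, osc f (cell w)

/-- Total variation in the sense of definition (A). -/
def VA (f : ℝ × ℝ → ℝ) : ℝ≥0∞ := ⨆ n : ℕ, oscSum n f

/-- Bounded variation in the sense of definition (A). -/
def BVA (f : ℝ × ℝ → ℝ) : Prop := VA f < ⊤

/-- `s = log 3 / log 2`, the dimension of `SG`. -/
def sdim : ℝ := Real.log 3 / Real.log 2

/-- Total oscillation of order `n` with exponent `s`. -/
def oscSumS (n : ℕ) (f : ℝ × ℝ → ℝ) : ℝ≥0∞ :=
  ∑ w : Fin n → Fin 3, (osc f (cell w)) ^ sdim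

/-- Total variation in the sense of definition (A*). -/
def VAs (f : ℝ × ℝ → ℝ) : ℝ≥0∞ := ⨆ n : ℕ, oscSumS n f

/-- Bounded variation in the sense of definition (A*). -/
def BVAs (f : ℝ × ℝ → ℝ) : Prop := VAs f < ⊤

/-- The graph `G_f = {(t, f t) : t ∈ SG} ⊂ ℝ³`. -/
def graphSG (f : ℝ × ℝ → ℝ) : Set ((ℝ × ℝ) × ℝ) := (fun t => (t, f t)) '' SG

/-- Smallest number of sets of diameter at most `δ` needed to cover `F`. -/
def coverNum {X : Type*} [MetricSpace X] (F : Set X) (δ : ℝ) : ℕ :=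
  sInf {n : ℕ | ∃ t : Finset (Set X), t.card = n ∧ F ⊆ ⋃₀ ↑t ∧ ∀ U ∈ t, Metric.diam U ≤ δ}

/-- Upper box (Minkowski) dimension. -/
def upperBoxDim {X : Type*} [MetricSpace X] (F : Set X) : ℝ :=
  Filter.limsup (fun δ : ℝ => Real.log (coverNum F δ) / (-Real.log δ)) (nhdsWithin 0 (Set.Ioi 0))

/-- Lower box dimension. -/
def lowerBoxDim {X : Type*} [MetricSpace X] (F : Set X) : ℝ :=
  Filter.liminf (fun δ : ℝ => Real.log (coverNum F δ) / (-Real.log δ)) (nhdsWithin 0 (Set.Ioi 0))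

/-- The Euclidean norm on `ℝ × ℝ`. -/
def enorm2 (x : ℝ × ℝ) : ℝ := Real.sqrt (x.1 ^ 2 + x.2 ^ 2)

/-- The level-`m` vertex `u_w(q_i)`. -/
def vtx {m : ℕ} (w : Fin m → Fin 3) (i : Fin 3) : ℝ × ℝ := uw (List.ofFn w) (q i)

/-- The graph energy `E_m(f) = (5/3)^m Σ_{x ∼_m y} (f x - f y)²`. -/
def energyLevel (m : ℕ) (f : ℝ × ℝ → ℝ) : ℝ :=
  (5 / 3 : ℝ) ^ m * ∑ w : Fin m → Fin 3, ∑ p : Fin 3 × Fin 3,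
    if p.1 < p.2 then (f (vtx w p.1) - f (vtx w p.2)) ^ 2 else 0

/-- `h` is harmonic on `SG` if the graph energies are all equal. -/
def Harmonic (h : ℝ × ℝ → ℝ) : Prop := ∀ m : ℕ, energyLevel m h = energyLevel (m + 1) h

lemma usymm (i j : Fin 3) : u i (q j) = u j (q i) := by simp [u, add_comm]
lemma uqq (i : Fin 3) : u i (q i) = q i := by
  simp only [u]
  rw [← two_smul ℝ (q i), smul_smul]; norm_num

lemma E0 (f : ℝ × ℝ → ℝ) : energyLevel 0 f = (f (q 0) - f (q 1))^2 + (f (q 0) - f (q 2))^2 + (f (q 1) - f (q 2))^2 := by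
  unfold energyLevel
  rw [Fintype.sum_unique]
  simp only [vtx, uw, List.ofFn_zero, id_eq, Fintype.sum_prod_type, Fin.sum_univ_three]
  norm_num [Fin.lt_def]

lemma E1 (f : ℝ × ℝ → ℝ) : energyLevel 1 f = (5/3) * ∑ i : Fin 3,
    ((f (u i (q 0)) - f (u i (q 1)))^2 + (f (u i (q 0)) - f (u i (q 2)))^2 + (f (u i (q 1)) - f (u i (q 2)))^2) := by
  unfold energyLevel
  rw [show (∑ w : Fin 1 → Fin 3, ∑ p : Fin 3 × Fin 3,
    if p.1 < p.2 then (f (vtx w p.1) - f (vtx w p.2)) ^ 2 else 0)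
    = ∑ i : Fin 3, ∑ p : Fin 3 × Fin 3,
    if p.1 < p.2 then (f (vtx (fun _ : Fin 1 => i) p.1) - f (vtx (fun _ : Fin 1 => i) p.2)) ^ 2 else 0
    from ((Equiv.funUnique (Fin 1) (Fin 3)).symm.sum_comp _).symm]
  simp only [vtx, uw, List.ofFn_succ, List.ofFn_zero, id_eq, Function.comp,
    Fintype.sum_prod_type, Fin.sum_univ_three]
  norm_num [Fin.lt_def]

lemma quadrule (a b c x y z : ℝ)
    (hf : (a - b) ^ 2 + (a - c) ^ 2 + (b - c) ^ 2 =
      5 / 3 * ((a - z) ^ 2 + (a - y) ^ 2 + (z - y) ^ 2 + ((z - b) ^ 2 + (z - x) ^ 2 + (b - x) ^ 2) +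
        ((y - x) ^ 2 + (y - c) ^ 2 + (x - c) ^ 2))) :
    z = (2*a + 2*b + c) / 5 ∧ y = (2*a + 2*c + b) / 5 ∧ x = (2*b + 2*c + a) / 5 := by
  have key : 2*((5*x - (a + 2*b + 2*c))^2 + (5*y - (2*a + b + 2*c))^2 + (5*z - (2*a + 2*b + c))^2)
      + (((5*x - (a + 2*b + 2*c)) - (5*y - (2*a + b + 2*c)))^2
      + ((5*y - (2*a + b + 2*c)) - (5*z - (2*a + 2*b + c)))^2
      + ((5*x - (a + 2*b + 2*c)) - (5*z - (2*a + 2*b + c)))^2) = 0 := by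
    linear_combination (-15 : ℝ) * hf
  have sqs : ∀ t : ℝ, t^2 = 0 → t = 0 := fun t ht => pow_eq_zero_iff two_ne_zero |>.mp ht
  have hx0 : 5*x - (a + 2*b + 2*c) = 0 := by
    apply sqs
    have h1 := sq_nonneg (5*x - (a + 2*b + 2*c))
    have h2 := sq_nonneg (5*y - (2*a + b + 2*c))
    have h3 := sq_nonneg (5*z - (2*a + 2*b + c))
    have h4 := sq_nonneg ((5*x - (a + 2*b + 2*c)) - (5*y - (2*a + b + 2*c)))
    have h5 := sq_nonneg ((5*y - (2*a + b + 2*c)) - (5*z - (2*a + 2*b + c)))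
    have h6 := sq_nonneg ((5*x - (a + 2*b + 2*c)) - (5*z - (2*a + 2*b + c)))
    linarith [key]
  have hy0 : 5*y - (2*a + b + 2*c) = 0 := by
    apply sqs
    have h1 := sq_nonneg (5*x - (a + 2*b + 2*c))
    have h2 := sq_nonneg (5*y - (2*a + b + 2*c))
    have h3 := sq_nonneg (5*z - (2*a + 2*b + c))
    have h4 := sq_nonneg ((5*x - (a + 2*b + 2*c)) - (5*y - (2*a + b + 2*c)))
    have h5 := sq_nonneg ((5*y - (2*a + b + 2*c)) - (5*z - (2*a + 2*b + c)))
    have h6 := sq_nonneg ((5*x - (a + 2*b + 2*c)) - (5*z - (2*a + 2*b + c)))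
    linarith [key]
  have hz0 : 5*z - (2*a + 2*b + c) = 0 := by
    apply sqs
    have h1 := sq_nonneg (5*x - (a + 2*b + 2*c))
    have h2 := sq_nonneg (5*y - (2*a + b + 2*c))
    have h3 := sq_nonneg (5*z - (2*a + 2*b + c))
    have h4 := sq_nonneg ((5*x - (a + 2*b + 2*c)) - (5*y - (2*a + b + 2*c)))
    have h5 := sq_nonneg ((5*y - (2*a + b + 2*c)) - (5*z - (2*a + 2*b + c)))
    have h6 := sq_nonneg ((5*x - (a + 2*b + 2*c)) - (5*z - (2*a + 2*b + c)))
    linarith [key]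
  exact ⟨by linarith, by linarith, by linarith⟩

lemma rule (f : ℝ × ℝ → ℝ) (hf : energyLevel 0 f = energyLevel 1 f) :
    f (u 0 (q 1)) = (2 * f (q 0) + 2 * f (q 1) + f (q 2)) / 5 ∧
    f (u 0 (q 2)) = (2 * f (q 0) + 2 * f (q 2) + f (q 1)) / 5 ∧
    f (u 1 (q 2)) = (2 * f (q 1) + 2 * f (q 2) + f (q 0)) / 5 := by
  rw [E0, E1] at hf
  rw [Fin.sum_univ_three, uqq 0, uqq 1, uqq 2, usymm 1 0, usymm 2 0, usymm 2 1] at hf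
  obtain ⟨h1, h2, h3⟩ := quadrule (f (q 0)) (f (q 1)) (f (q 2))
    (f (u 1 (q 2))) (f (u 0 (q 2))) (f (u 0 (q 1))) hf
  exact ⟨by linarith, by linarith, by linarith⟩

/-- the `1/5–2/5` rule for harmonic functions: for any permutation
`(i,j,k)` of the vertices, `h(q_{ij}) = (2/5)h(q_i) + (2/5)h(q_j) + (1/5)h(q_k)`. -/
theorem stmt6 (h : ℝ × ℝ → ℝ) (hh : Harmonic h) :
    ∀ i j k : Fin 3, i ≠ j → j ≠ k → i ≠ k →
      h (u i (q j)) = 2 / 5 * h (q i) + 2 / 5 * h (q j) + 1 / 5 * h (q k) := by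
  obtain ⟨hz, hy, hx⟩ := rule h (hh 0)
  intro i j k hij hjk hik
  fin_cases i <;> fin_cases j <;> fin_cases k <;>
    simp_all [usymm 1 0, usymm 2 0, usymm 2 1] <;> linarith
end
end

section
/- The function f : SG → ℝ defined by f(x₁, x₂) = x₁ is Lipschitz continuous but is not of bounded variation on SG in the sense of definition (A): Σ_{w ∈ {1,2,3}^n} R_f[u_w(SG)] = (3/2)^n → ∞ as n → ∞. -/
open Set Metric MeasureTheory Filter ENNReal

noncomputable section

/-!
Every point of `SG` has first coordinate in `[0, 1]`, and the vertices `(0,0)` and `(1,0)` lie in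
`SG`, so `x₁` has oscillation exactly `1` on `SG`. A word map `u_w` of length `n` multiplies
differences of first coordinates by `2⁻ⁿ`, so each of the `3ⁿ` cells of level `n` carries
oscillation `2⁻ⁿ`, and the oscillation sums are `(3/2)ⁿ`.
-/

open Topology

lemma hasSum_inv_two_pow_succ : HasSum (fun n : ℕ => (2 : ℝ)⁻¹ ^ (n + 1)) 1 := by
  convert hasSum_geometric_two' 1 using 1
  ext n
  rw [pow_succ, inv_pow]
  field_simp

lemma q_fst_mem_Icc (i : Fin 3) : (q i).1 ∈ Icc (0 : ℝ) 1 := by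
  fin_cases i <;> norm_num [q]

lemma norm_q_le_one (i : Fin 3) : ‖q i‖ ≤ 1 := by
  have h3 : Real.sqrt 3 ≤ 2 := Real.sqrt_le_iff.2 ⟨by norm_num, by norm_num⟩
  fin_cases i <;> norm_num [q, Prod.norm_def, abs_of_nonneg (Real.sqrt_nonneg 3)]
  linarith

lemma hasSum_addr (σ : ℕ → Fin 3) :
    HasSum (fun n => ((2 : ℝ)⁻¹ ^ (n + 1)) • q (σ n)) (addr σ) := by
  refine (Summable.of_norm_bounded hasSum_inv_two_pow_succ.summable fun n => ?_).hasSum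
  rw [norm_smul, Real.norm_of_nonneg (by positivity)]
  exact mul_le_of_le_one_right (by positivity) (norm_q_le_one _)

lemma addr_const (i : Fin 3) : addr (fun _ => i) = q i := by
  simpa using ((hasSum_inv_two_pow_succ.smul_const (q i)).unique (hasSum_addr _)).symm

lemma q_mem_SG (i : Fin 3) : q i ∈ SG := ⟨fun _ => i, addr_const i⟩

lemma fst_mem_Icc_of_mem_SG {x : ℝ × ℝ} (hx : x ∈ SG) : x.1 ∈ Icc (0 : ℝ) 1 := by
  obtain ⟨σ, rfl⟩ := hx
  have hfst : HasSum (fun n => (2 : ℝ)⁻¹ ^ (n + 1) * (q (σ n)).1) (addr σ).1 :=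
    (hasSum_addr σ).mapL (ContinuousLinearMap.fst ℝ ℝ ℝ)
  have hpos (n : ℕ) : (0 : ℝ) ≤ 2⁻¹ ^ (n + 1) := by positivity
  exact ⟨hasSum_le (fun n => mul_nonneg (hpos n) (q_fst_mem_Icc _).1) hasSum_zero hfst,
    hasSum_le (fun n => mul_le_of_le_one_right (hpos n) (q_fst_mem_Icc _).2) hfst
      hasSum_inv_two_pow_succ⟩

lemma osc_fst_SG : osc Prod.fst SG = 1 := by
  refine le_antisymm (iSup₂_le fun x hx => iSup₂_le fun y hy => ?_) ?_
  · obtain ⟨hx₀, hx₁⟩ := fst_mem_Icc_of_mem_SG hx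
    obtain ⟨hy₀, hy₁⟩ := fst_mem_Icc_of_mem_SG hy
    exact ENNReal.ofReal_le_one.2 (abs_sub_le_iff.2 ⟨by linarith, by linarith⟩)
  · refine le_iSup₂_of_le (q 1) (q_mem_SG 1) (le_iSup₂_of_le (q 0) (q_mem_SG 0) ?_)
    norm_num [q]

lemma osc_image_of_abs_sub_eq {f : ℝ × ℝ → ℝ} {g : ℝ × ℝ → ℝ × ℝ} {c : ℝ} (hc : 0 ≤ c)
    (hg : ∀ x y, |f (g x) - f (g y)| = c * |f x - f y|) (X : Set (ℝ × ℝ)) :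
    osc f (g '' X) = ENNReal.ofReal c * osc f X := by
  simp only [osc, iSup_image, hg, ENNReal.ofReal_mul hc, ENNReal.mul_iSup]

lemma fst_uw_sub (w : List (Fin 3)) (x y : ℝ × ℝ) :
    (uw w x).1 - (uw w y).1 = (2 : ℝ)⁻¹ ^ w.length * (x.1 - y.1) := by
  induction w with
  | nil => simp [uw]
  | cons i w ih =>
    simp only [uw, Function.comp_apply, u, Prod.smul_fst, Prod.fst_add, smul_eq_mul,
      List.length_cons, pow_succ]
    linear_combination 2⁻¹ * ih

lemma osc_fst_cell {n : ℕ} (w : Fin n → Fin 3) :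
    osc Prod.fst (cell w) = ENNReal.ofReal ((2 : ℝ)⁻¹ ^ n) := by
  have hscale (x y : ℝ × ℝ) :
      |(uw (List.ofFn w) x).1 - (uw (List.ofFn w) y).1| = (2 : ℝ)⁻¹ ^ n * |x.1 - y.1| := by
    rw [fst_uw_sub, List.length_ofFn, abs_mul, abs_of_nonneg (by positivity)]
  rw [cell, osc_image_of_abs_sub_eq (by positivity) hscale, osc_fst_SG, mul_one]

lemma oscSum_fst (n : ℕ) : oscSum n Prod.fst = ENNReal.ofReal ((3 / 2 : ℝ) ^ n) := by
  have hcard : ((Fintype.card (Fin n → Fin 3) : ℕ) : ℝ) = 3 ^ n := by simp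
  rw [oscSum, Finset.sum_congr rfl fun w _ => osc_fst_cell w, Finset.sum_const,
    Finset.card_univ, nsmul_eq_mul, ← ENNReal.ofReal_natCast, hcard,
    ← ENNReal.ofReal_mul (by positivity), ← mul_pow]
  norm_num

lemma not_BVA_of_tendsto_oscSum {f : ℝ × ℝ → ℝ}
    (hf : Tendsto (fun n => oscSum n f) atTop (𝓝 ⊤)) : ¬ BVA f :=
  not_lt_of_ge (le_of_tendsto' hf fun n => le_iSup (fun n => oscSum n f) n)

/-- the coordinate function `f(x₁,x₂) = x₁` is Lipschitz on `SG` but not of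
bounded variation in the sense (A): `Σ_w R_f[u_w(SG)] = (3/2)ⁿ → ∞`. -/
theorem stmt10 :
    LipschitzOnWith 1 (fun x : ℝ × ℝ => x.1) SG ∧
    (∀ n : ℕ, oscSum n (fun x : ℝ × ℝ => x.1) = ENNReal.ofReal ((3 / 2 : ℝ) ^ n)) ∧
    Filter.Tendsto (fun n : ℕ => oscSum n (fun x : ℝ × ℝ => x.1)) Filter.atTop (nhds ⊤) ∧
    ¬ BVA (fun x : ℝ × ℝ => x.1) := by
  have htendsto : Tendsto (fun n => oscSum n Prod.fst) atTop (𝓝 ⊤) := by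
    simp only [oscSum_fst]
    exact ENNReal.tendsto_ofReal_atTop.comp (tendsto_pow_atTop_atTop_of_one_lt (by norm_num))
  exact ⟨LipschitzWith.prod_fst.lipschitzOnWith, oscSum_fst, htendsto,
    not_BVA_of_tendsto_oscSum htendsto⟩
end
end

section
/- If f : SG → ℝ is of bounded variation on SG in the sense (A), then f is continuous H^s-almost everywhere, where s = log 3/log 2; i.e., the set of discontinuity points of f has s-dimensional Hausdorff measure zero. -/
open Set Metric MeasureTheory Filter ENNReal

noncomputable section

/-! If `f` jumps by at least `ε` at `x ∈ SG`, then at every level `n` some cell containing `x`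
has oscillation at least `ε`: the level-`n` cells missing `x` form a closed set, so the points of
`SG` near `x` all lie in cells containing `x`. Bounded variation allows at most `V_A(f)/ε` such
cells per level, each of diameter at most `2⁻ⁿ diam SG`, so the points where `f` jumps by `ε`
are covered by boundedly many sets of vanishing diameter and are `H^s`-null. The discontinuity
set is the countable union of these sets over `ε = 1/k`. -/

open Topology

lemma norm_smul_q_le (n : ℕ) (i : Fin 3) :
    ‖((2:ℝ)⁻¹ ^ (n+1)) • q i‖ ≤ (2:ℝ)⁻¹ ^ (n+1) * ∑ j, ‖q j‖ := by
  rw [norm_smul, Real.norm_of_nonneg (by positivity)]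
  gcongr
  exact Finset.single_le_sum (fun j _ => norm_nonneg (q j)) (Finset.mem_univ i)

lemma summable_two_inv_pow_succ_mul (C : ℝ) : Summable fun n : ℕ => (2:ℝ)⁻¹ ^ (n+1) * C := by
  simpa [pow_succ, mul_assoc] using summable_geometric_two.mul_right (2⁻¹ * C)

lemma summable_addr (σ : ℕ → Fin 3) : Summable fun n => ((2:ℝ)⁻¹ ^ (n+1)) • q (σ n) :=
  .of_norm_bounded (summable_two_inv_pow_succ_mul _) fun n => norm_smul_q_le n (σ n)

lemma continuous_addr : Continuous addr := by
  have hq : Continuous q := continuous_of_discreteTopology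
  exact continuous_tsum (fun n => by fun_prop) (summable_two_inv_pow_succ_mul _) fun n σ =>
    norm_smul_q_le n (σ n)

lemma isCompact_SG : IsCompact SG :=
  isCompact_range continuous_addr

lemma addr_eq_u_addr_tail (σ : ℕ → Fin 3) : addr σ = u (σ 0) (addr fun k => σ (k+1)) := by
  rw [addr, (summable_addr σ).tsum_eq_zero_add, u, addr, smul_add,
    ← (summable_addr _).tsum_const_smul, add_comm]
  simp [smul_smul, pow_succ']

lemma addr_mem_cell (σ : ℕ → Fin 3) (n : ℕ) : addr σ ∈ cell fun i : Fin n => σ i := by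
  induction n generalizing σ with
  | zero => exact ⟨addr σ, ⟨σ, rfl⟩, rfl⟩
  | succ n ih =>
    have hcell :
        cell (fun i : Fin (n+1) => σ i) = u (σ 0) '' cell fun i : Fin n => σ (i+1) := by
      simp [cell, List.ofFn_succ, uw, Set.image_image]
    rw [hcell, addr_eq_u_addr_tail]
    exact mem_image_of_mem _ (ih fun k => σ (k+1))

lemma SG_subset_iUnion_cell (n : ℕ) : SG ⊆ ⋃ w : Fin n → Fin 3, cell w := by
  rintro _ ⟨σ, rfl⟩
  exact mem_iUnion.2 ⟨_, addr_mem_cell σ n⟩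

lemma lipschitzWith_u (i : Fin 3) : LipschitzWith 2⁻¹ (u i) := by
  refine LipschitzWith.of_dist_le_mul fun x y => ?_
  simp [u, dist_eq_norm, ← smul_sub, norm_smul]

lemma lipschitzWith_uw (l : List (Fin 3)) : LipschitzWith (2⁻¹ ^ l.length) (uw l) := by
  induction l with
  | nil => simpa [uw] using LipschitzWith.id
  | cons i l ih =>
    rw [uw, List.length_cons, pow_succ']
    exact (lipschitzWith_u i).comp ih

lemma isClosed_cell {n : ℕ} (w : Fin n → Fin 3) : IsClosed (cell w) :=
  (isCompact_SG.image (lipschitzWith_uw _).continuous).isClosed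

lemma ediam_cell_le {n : ℕ} (w : Fin n → Fin 3) :
    ediam (cell w) ≤ 2⁻¹ ^ n * ediam SG := by
  simpa [cell, ENNReal.inv_pow] using (lipschitzWith_uw (List.ofFn w)).ediam_image_le SG

lemma eventually_nhds_forall_mem_imp_mem {X ι : Type*} [TopologicalSpace X] [Finite ι]
    {C : ι → Set X} (hC : ∀ i, IsClosed (C i)) (x : X) :
    ∀ᶠ y in 𝓝 x, ∀ i, y ∈ C i → x ∈ C i := by
  refine eventually_all.2 fun i => ?_
  by_cases hx : x ∈ C i
  · exact .of_forall fun _ _ => hx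
  · filter_upwards [(hC i).isOpen_compl.mem_nhds hx] with y hy hyC using absurd hyC hy

lemma hausdorffMeasure_eq_zero_of_finite_covers {X : Type*} [EMetricSpace X] [MeasurableSpace X]
    [BorelSpace X] {d : ℝ} (hd : 0 < d) {A : Set X} {ι : ℕ → Type*} [∀ n, Fintype (ι n)]
    {K : ℝ≥0∞} (hK : K ≠ ⊤) (hcard : ∀ n, (Fintype.card (ι n) : ℝ≥0∞) ≤ K)
    {r : ℕ → ℝ≥0∞} (hr : Tendsto r atTop (𝓝 0)) (t : ∀ n, ι n → Set X)
    (hdiam : ∀ n i, ediam (t n i) ≤ r n) (hcover : ∀ n, A ⊆ ⋃ i, t n i) :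
    μH[d] A = 0 := by
  have hsum : ∀ n, ∑ i, ediam (t n i) ^ d ≤ K * r n ^ d := fun n =>
    calc ∑ i, ediam (t n i) ^ d ≤ ∑ _i : ι n, r n ^ d :=
          Finset.sum_le_sum fun i _ => ENNReal.rpow_le_rpow (hdiam n i) hd.le
      _ = Fintype.card (ι n) * r n ^ d := by simp
      _ ≤ K * r n ^ d := by gcongr; exact hcard n
  have hbound : Tendsto (fun n => K * r n ^ d) atTop (𝓝 0) := by
    simpa [ENNReal.zero_rpow_of_pos hd] using
      ENNReal.Tendsto.const_mul (hr.ennrpow_const d) (Or.inr hK)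
  refine nonpos_iff_eq_zero.1 ?_
  calc μH[d] A ≤ liminf (fun n => ∑ i, ediam (t n i) ^ d) atTop :=
        Measure.hausdorffMeasure_le_liminf_sum d A r hr t (.of_forall hdiam)
          (.of_forall hcover)
    _ ≤ liminf (fun n => K * r n ^ d) atTop := liminf_le_liminf (.of_forall hsum)
    _ = 0 := hbound.liminf_eq

lemma ofReal_abs_sub_le_osc {f : ℝ × ℝ → ℝ} {X : Set (ℝ × ℝ)} {x y : ℝ × ℝ} (hx : x ∈ X)
    (hy : y ∈ X) : ENNReal.ofReal |f x - f y| ≤ osc f X :=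
  le_iSup₂_of_le x hx (le_iSup₂_of_le y hy le_rfl)

def heavyCells (f : ℝ × ℝ → ℝ) (ε : ℝ≥0∞) (n : ℕ) : Finset (Fin n → Fin 3) :=
  {w | ε ≤ osc f (cell w)}

lemma card_heavyCells_mul_le_VA (f : ℝ × ℝ → ℝ) (ε : ℝ≥0∞) (n : ℕ) :
    (heavyCells f ε n).card * ε ≤ VA f :=
  calc (heavyCells f ε n).card * ε = ∑ _w ∈ heavyCells f ε n, ε := by simp
    _ ≤ ∑ w ∈ heavyCells f ε n, osc f (cell w) :=
        Finset.sum_le_sum fun w hw => (Finset.mem_filter.1 hw).2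
    _ ≤ oscSum n f := Finset.sum_le_sum_of_subset (Finset.subset_univ _)
    _ ≤ VA f := le_iSup (fun n => oscSum n f) n

lemma sdim_pos : 0 < sdim :=
  div_pos (Real.log_pos (by norm_num)) (Real.log_pos (by norm_num))

lemma hausdorffMeasure_iInter_iUnion_heavyCells {f : ℝ × ℝ → ℝ} (hbv : BVA f) {ε : ℝ≥0∞}
    (hε : ε ≠ 0) : μH[sdim] (⋂ n, ⋃ w ∈ heavyCells f ε n, cell w) = 0 := by
  refine hausdorffMeasure_eq_zero_of_finite_covers sdim_pos (K := VA f / ε)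
    (ENNReal.div_lt_top hbv.ne hε).ne (fun n => ?_) (r := fun n => 2⁻¹ ^ n * ediam SG) ?_
    (fun n (w : heavyCells f ε n) => cell w.1) (fun n w => ediam_cell_le w.1)
    fun n x hx => ?_
  · rw [Fintype.card_coe, ENNReal.le_div_iff_mul_le (.inl hε) (.inr hbv.ne)]
    exact card_heavyCells_mul_le_VA f ε n
  · simpa using ENNReal.Tendsto.mul_const (ENNReal.tendsto_pow_atTop_nhds_zero_of_lt_one
      (by norm_num)) (.inr (isCompact_SG.isBounded.ediam_ne_top))
  · obtain ⟨w, hw, hxw⟩ := mem_iUnion₂.1 (mem_iInter.1 hx n)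
    exact mem_iUnion.2 ⟨⟨w, hw⟩, hxw⟩

lemma setOf_not_continuousWithinAt_subset (f : ℝ × ℝ → ℝ) :
    {x | x ∈ SG ∧ ¬ ContinuousWithinAt f SG x} ⊆
      ⋃ k : ℕ, ⋂ n, ⋃ w ∈ heavyCells f (k : ℝ≥0∞)⁻¹ n, cell w := by
  rintro x ⟨hx, hdisc⟩
  rw [ContinuousWithinAt, Metric.tendsto_nhds] at hdisc
  push Not at hdisc
  obtain ⟨ε, hε, hjump⟩ := hdisc
  obtain ⟨k, hk⟩ := ENNReal.exists_inv_nat_lt (ENNReal.ofReal_pos.2 hε).ne'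
  refine mem_iUnion.2 ⟨k, mem_iInter.2 fun n => ?_⟩
  have hnear : ∀ᶠ y in 𝓝[SG] x, y ∈ SG ∧ ∀ w : Fin n → Fin 3, y ∈ cell w → x ∈ cell w :=
    eventually_mem_nhdsWithin.and
      (nhdsWithin_le_nhds (eventually_nhds_forall_mem_imp_mem isClosed_cell x))
  obtain ⟨y, hyf, hy, hcells⟩ := (hjump.and_eventually hnear).exists
  obtain ⟨w, hyw⟩ := mem_iUnion.1 (SG_subset_iUnion_cell n hy)
  refine mem_iUnion₂.2 ⟨w, Finset.mem_filter.2 ⟨Finset.mem_univ _, ?_⟩, hcells w hyw⟩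
  calc (k : ℝ≥0∞)⁻¹ ≤ ENNReal.ofReal ε := hk.le
    _ ≤ ENNReal.ofReal |f y - f x| := ENNReal.ofReal_le_ofReal hyf
    _ ≤ osc f (cell w) := ofReal_abs_sub_le_osc hyw (hcells w hyw)

/-- a function of bounded variation in sense (A) is continuous
`H^s`-almost everywhere on `SG`, `s = log 3 / log 2`. -/
theorem stmt18 (f : ℝ × ℝ → ℝ) (hbv : BVA f) :
    μH[sdim] {x | x ∈ SG ∧ ¬ ContinuousWithinAt f SG x} = 0 :=
  measure_mono_null (setOf_not_continuousWithinAt_subset f) <| measure_iUnion_null fun k =>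
    hausdorffMeasure_iInter_iUnion_heavyCells hbv
      (ENNReal.inv_ne_zero.2 (ENNReal.natCast_ne_top k))
end
end
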